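/- arXiv:1012.2088 — 7 statements merged into one kernel-verified Lean document; each statement's English description precedes it below -/
import Mathlib

section
/- For every tree T and every positive integer k ≥ 1, the minimum cardinality of a k-path vertex cover of T is at most |V(T)|/k. -/
open SimpleGraph

variable {V : Type*}

/-- `S` is a `k`-path vertex cover of `G`: every path on `k` vertices meets `S`. -/
def IsPathVC (G : SimpleGraph V) (k : ℕ) (S : Set V) : Prop :=
  ∀ ⦃u v : V⦄ (w : G.Walk u v), w.IsPath → w.length + 1 = k → ∃ x ∈ w.support, x ∈ S

/-- `psi G k` is the minimum cardinality of a `k`-path vertex cover of `G`. -/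
noncomputable def psi (G : SimpleGraph V) (k : ℕ) : ℕ :=
  sInf {n | ∃ S : Set V, IsPathVC G k S ∧ S.ncard = n}

/-!
Greedy peeling. For a vertex `v` and a set `N` of neighbours of `v`, call the vertices that `v`
reaches inside `U \ N` a branch at `v`. Take a branch `A` at `v` with at least `k` vertices and
minimal among such. Every branch at a neighbour `c ∉ N` of `v` away from `v` is a proper
subset of `A` (this is where acyclicity enters), so it has fewer than `k` vertices. A `k`-path
in `U` that avoids `v` but meets `A` would lie inside one of those branches, so `v` together with
a cover of `U \ A` covers `U`. Removing `A` costs one vertex of the cover per `k` vertices.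
-/

namespace SimpleGraph

variable {G : SimpleGraph V}

theorem Walk.IsPath.length_lt_ncard {s : Set V} {a b : V} {w : G.Walk a b} (hw : w.IsPath)
    (hs : s.Finite) (hws : ∀ y ∈ w.support, y ∈ s) : w.length < s.ncard := by
  classical
  calc w.length < w.support.length := by rw [Walk.length_support]; exact Nat.lt_succ_self _
    _ = (w.support.toFinset : Set V).ncard := by
      rw [Set.ncard_coe_finset, List.toFinset_card_of_nodup hw.support_nodup]
    _ ≤ s.ncard := Set.ncard_le_ncard (fun y hy => hws y (by simpa using hy)) hs

theorem IsAcyclic.mem_support_of_adj (hG : G.IsAcyclic) {v u c : V} (hu : G.Adj v u)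
    (hc : G.Adj v c) (huc : u ≠ c) (p : G.Walk c u) : v ∈ p.support := by
  by_contra hv
  have hedge := isBridge_iff_forall_walk_mem_edges.mp (isAcyclic_iff_forall_adj_isBridge.mp hG hu)
    (Walk.cons hc p)
  rw [Walk.edges_cons, List.mem_cons] at hedge
  rcases hedge with heq | hmem
  · exact huc (Sym2.congr_right.mp heq)
  · exact hv (p.fst_mem_support_of_mem_edges hmem)

def reachIn (G : SimpleGraph V) (W : Set V) (c : V) : Set V :=
  {x | ∃ p : G.Walk c x, ∀ y ∈ p.support, y ∈ W}

def IsPathVCIn (G : SimpleGraph V) (k : ℕ) (U S : Set V) : Prop :=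
  ∀ ⦃u v : V⦄ (w : G.Walk u v), w.IsPath → w.length + 1 = k → (∀ y ∈ w.support, y ∈ U) →
    ∃ x ∈ w.support, x ∈ S

section reachIn

variable {W W' : Set V} {c x : V}

theorem reachIn_subset : G.reachIn W c ⊆ W := fun _ ⟨p, hp⟩ => hp _ p.end_mem_support

theorem mem_of_mem_reachIn (hx : x ∈ G.reachIn W c) : c ∈ W :=
  let ⟨p, hp⟩ := hx
  hp _ p.start_mem_support

theorem mem_reachIn_self (hc : c ∈ W) : c ∈ G.reachIn W c :=
  ⟨Walk.nil, by simpa using hc⟩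

theorem reachIn_mono (h : W ⊆ W') : G.reachIn W c ⊆ G.reachIn W' c :=
  fun _ ⟨p, hp⟩ => ⟨p, fun y hy => h (hp y hy)⟩

theorem support_subset_reachIn {a b : V} {w : G.Walk a b} (hx : x ∈ G.reachIn W c)
    (hwW : ∀ y ∈ w.support, y ∈ W) (hxw : x ∈ w.support) : ∀ y ∈ w.support, y ∈ G.reachIn W c := by
  classical
  obtain ⟨p, hp⟩ := hx
  intro y hy
  refine ⟨p.append ((w.takeUntil x hxw).reverse.append (w.takeUntil y hy)), fun z hz => ?_⟩
  simp only [Walk.mem_support_append_iff, Walk.support_reverse, List.mem_reverse] at hz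
  rcases hz with hz | hz | hz
  · exact hp z hz
  · exact hwW z (w.support_takeUntil_subset_support hxw hz)
  · exact hwW z (w.support_takeUntil_subset_support hy hz)

theorem exists_adj_mem_reachIn_sdiff (hx : x ∈ G.reachIn W c) (hxc : x ≠ c) :
    ∃ d, G.Adj c d ∧ x ∈ G.reachIn (W \ {c}) d := by
  classical
  obtain ⟨p, hp⟩ := hx
  obtain ⟨d, hcd, q, hq⟩ := Walk.exists_eq_cons_of_ne hxc.symm p.bypass
  have hqpath : (Walk.cons hcd q).IsPath := hq ▸ p.bypass_isPath
  refine ⟨d, hcd, q, fun y hy => ⟨?_, ?_⟩⟩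
  · exact hp y (p.support_bypass_subset_support (by rw [hq]; exact List.mem_cons_of_mem _ hy))
  · rintro rfl
    exact ((Walk.cons_isPath_iff _ _).mp hqpath).2 hy

theorem IsAcyclic.reachIn_sdiff_subset (hG : G.IsAcyclic) {U N : Set V} {v : V}
    (hN : N ⊆ G.neighborSet v) (hv : v ∈ U) (hc : G.Adj v c) (hcN : c ∉ N) :
    G.reachIn (U \ {v}) c ⊆ G.reachIn (U \ N) v := by
  classical
  rintro y ⟨p, hp⟩
  refine ⟨Walk.cons hc p, fun z hz => ?_⟩
  rw [Walk.support_cons, List.mem_cons] at hz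
  rcases hz with rfl | hz
  · exact ⟨hv, fun hzN => G.irrefl (hN hzN)⟩
  refine ⟨(hp z hz).1, fun hzN => ?_⟩
  have hvp := hG.mem_support_of_adj (hN hzN) hc (ne_of_mem_of_not_mem hzN hcN) (p.takeUntil z hz)
  exact (hp v (p.support_takeUntil_subset_support hz hvp)).2 rfl

end reachIn

variable {k : ℕ} {U : Set V}

theorem IsAcyclic.exists_minimal_branch (hG : G.IsAcyclic) (hU : U.Finite) (hk : 0 < k) {v₀ : V}
    (hv₀ : k ≤ (G.reachIn U v₀).ncard) :
    ∃ v N, N ⊆ G.neighborSet v ∧ k ≤ (G.reachIn (U \ N) v).ncard ∧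
      ∀ c, G.Adj v c → c ∉ N → (G.reachIn (U \ {v}) c).ncard < k := by
  obtain ⟨⟨v, N⟩, ⟨hN, hkA⟩, hmin⟩ :=
    (measure fun p : V × Set V => (G.reachIn (U \ p.2) p.1).ncard).wf.has_min
      {p | p.2 ⊆ G.neighborSet p.1 ∧ k ≤ (G.reachIn (U \ p.2) p.1).ncard}
      ⟨(v₀, ∅), by simpa using hv₀⟩
  refine ⟨v, N, hN, hkA, fun c hvc hcN => ?_⟩
  by_contra! hkB
  obtain ⟨x, hx⟩ := (Set.ncard_pos (hU.sdiff.subset reachIn_subset)).mp (hk.trans_le hkA)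
  have hvA : v ∈ G.reachIn (U \ N) v := mem_reachIn_self (mem_of_mem_reachIn hx)
  have hBA : G.reachIn (U \ {v}) c ⊂ G.reachIn (U \ N) v :=
    (hG.reachIn_sdiff_subset hN (mem_of_mem_reachIn hx).1 hvc hcN).ssubset_of_mem_notMem hvA
      fun hvB => (reachIn_subset hvB).2 rfl
  exact hmin (c, {v}) ⟨by simpa using hvc.symm, hkB⟩
    (Set.ncard_lt_ncard hBA (hU.sdiff.subset reachIn_subset))

theorem disjoint_branch_of_branches_small (hU : U.Finite) {v : V} {N : Set V}
    (hsmall : ∀ c, G.Adj v c → c ∉ N → (G.reachIn (U \ {v}) c).ncard < k)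
    {a b : V} {w : G.Walk a b} (hw : w.IsPath) (hwk : w.length + 1 = k)
    (hwU : ∀ y ∈ w.support, y ∈ U) (hv : v ∉ w.support) :
    ∀ y ∈ w.support, y ∉ G.reachIn (U \ N) v := by
  intro x hx hxA
  obtain ⟨c, hvc, hxc⟩ := exists_adj_mem_reachIn_sdiff hxA (ne_of_mem_of_not_mem hx hv)
  have hcN : c ∉ N := (mem_of_mem_reachIn hxc).1.2
  have hwB : ∀ y ∈ w.support, y ∈ G.reachIn (U \ {v}) c :=
    support_subset_reachIn (reachIn_mono (Set.sdiff_subset_sdiff_left Set.sdiff_subset) hxc)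
      (fun y hy => ⟨hwU y hy, fun hyv => hv (hyv ▸ hy)⟩) hx
  have := hw.length_lt_ncard (hU.sdiff.subset reachIn_subset) hwB
  have := hsmall c hvc hcN
  omega

theorem IsAcyclic.exists_peel (hG : G.IsAcyclic) (hU : U.Finite) (h : ¬ G.IsPathVCIn k U ∅) :
    ∃ v A, A ⊆ U ∧ k ≤ A.ncard ∧
      ∀ S, G.IsPathVCIn k (U \ A) S → G.IsPathVCIn k U (insert v S) := by
  obtain ⟨a, b, w, hw, hwk, hwU⟩ : ∃ a b, ∃ w : G.Walk a b,
      w.IsPath ∧ w.length + 1 = k ∧ ∀ y ∈ w.support, y ∈ U := by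
    simpa [IsPathVCIn] using h
  have hka : k ≤ (G.reachIn U a).ncard := hwk ▸ hw.length_lt_ncard (hU.subset reachIn_subset)
    (support_subset_reachIn (mem_reachIn_self (hwU a w.start_mem_support)) hwU w.start_mem_support)
  obtain ⟨v, N, -, hkA, hsmall⟩ := hG.exists_minimal_branch hU (by omega) hka
  refine ⟨v, G.reachIn (U \ N) v, reachIn_subset.trans Set.sdiff_subset, hkA, fun S hS => ?_⟩
  intro a b w hw hwk hwU
  by_cases hv : v ∈ w.support
  · exact ⟨v, hv, Set.mem_insert _ _⟩
  obtain ⟨x, hx, hxS⟩ := hS w hw hwk fun y hy =>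
    ⟨hwU y hy, disjoint_branch_of_branches_small hU hsmall hw hwk hwU hv y hy⟩
  exact ⟨x, hx, Set.mem_insert_of_mem _ hxS⟩

theorem IsAcyclic.exists_isPathVCIn (hG : G.IsAcyclic) (k : ℕ) (hU : U.Finite) :
    ∃ S, k * S.ncard ≤ U.ncard ∧ G.IsPathVCIn k U S := by
  induction hn : U.ncard using Nat.strong_induction_on generalizing U with
  | _ n ih =>
  by_cases h : G.IsPathVCIn k U ∅
  · exact ⟨∅, by simp, h⟩
  have hk : 0 < k := Nat.pos_of_ne_zero <| by rintro rfl; exact h fun _ _ _ _ hlen _ => by omega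
  obtain ⟨v, A, hAU, hkA, hA⟩ := hG.exists_peel hU h
  have hcard : (U \ A).ncard + A.ncard = U.ncard := Set.ncard_sdiff_add_ncard_of_subset hAU hU
  obtain ⟨S, hS, hSU⟩ := ih (U \ A).ncard (by omega) hU.sdiff rfl
  refine ⟨insert v S, ?_, hA S hSU⟩
  calc k * (insert v S).ncard ≤ k * S.ncard + k := by
        simpa [Nat.mul_succ] using Nat.mul_le_mul_left k (Set.ncard_insert_le v S)
    _ ≤ n := by omega

theorem IsAcyclic.mul_psi_le [Finite V] (hG : G.IsAcyclic) (k : ℕ) :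
    k * psi G k ≤ Nat.card V := by
  obtain ⟨S, hS, hSV⟩ := hG.exists_isPathVCIn k Set.finite_univ
  have hpsi : psi G k ≤ S.ncard :=
    Nat.sInf_le ⟨S, fun _ _ w hw hwk => hSV w hw hwk fun _ _ => trivial, rfl⟩
  rw [Set.ncard_univ] at hS
  exact (Nat.mul_le_mul_left k hpsi).trans hS

end SimpleGraph

theorem psi_tree_le [Fintype V] (T : SimpleGraph V) (hT : T.IsTree) (k : ℕ) (hk : 1 ≤ k) :
    (psi T k : ℚ) ≤ (Fintype.card V : ℚ) / k := by
  have hkq : (0 : ℚ) < k := by exact_mod_cast hk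
  rw [le_div_iff₀ hkq, ← Nat.card_eq_fintype_card, mul_comm]
  exact_mod_cast hT.isAcyclic.mul_psi_le k
end

section
/- There exist 2-connected outerplanar graphs H on 2n vertices (for every n ≥ 3) with ψ_3(H) ≥ n; hence the bound ψ_3(G) ≤ |V(G)|/2 for outerplanar graphs is tight. -/
/-!
The graph is the `n`-cycle `v_0 … v_{n-1}` with a vertex `u_i` glued onto every edge
`v_i v_{i+1}`. It has the Hamiltonian cycle `v_0 u_0 v_1 u_1 …`, hence is 2-connected.

Outerplanarity: in a model of `K₄` or `K_{2,3}` some branch set `A` must contain cycle vertices,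
avoid a cycle vertex `v_p` (taken from another branch set), and share three distinct cycle edges
with other branch sets (a single `u_m` has only two neighbours, so it cannot replace a branch
set of degree three). Measuring positions forward from `p`, a step along an edge that avoids
`v_p` raises the position by at most one, and only into a cycle vertex; hence the cycle vertices
of `A` form an arc, which has only two boundary edges.

Finally the vertices outside a `3`-path vertex cover inject into `ZMod n`, so every cover has
at least `2n - n = n` vertices.
-/

open SimpleGraph

variable {V : Type*}

/-- `H` is a minor of `G`, witnessed by disjoint connected branch sets. -/
def IsMinor {α β : Type*} (H : SimpleGraph α) (G : SimpleGraph β) : Prop :=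
  ∃ f : α → Set β, (∀ a, (G.induce (f a)).Connected) ∧ Pairwise (Function.onFun Disjoint f) ∧
    ∀ ⦃a b : α⦄, H.Adj a b → ∃ u ∈ f a, ∃ v ∈ f b, G.Adj u v

/-- A graph is outerplanar iff it has no `K₄` minor and no `K_{2,3}` minor. -/
def IsOuterplanar (G : SimpleGraph V) : Prop :=
  ¬ IsMinor (completeGraph (Fin 4)) G ∧ ¬ IsMinor (completeBipartiteGraph (Fin 2) (Fin 3)) G

/-- A graph is 2-connected if it has at least 3 vertices and remains connected
after deleting any single vertex. -/
def IsTwoConnected [Fintype V] (G : SimpleGraph V) : Prop :=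
  3 ≤ Fintype.card V ∧ ∀ v : V, (G.induce {w | w ≠ v}).Connected

section General

variable {W : Type*} {G : SimpleGraph V} {G' : SimpleGraph W}

theorem Set.false_of_disjoint_of_mem_or_mem {α : Type*} {s t u : Set α} {a b : α}
    (hst : Disjoint s t) (hsu : Disjoint s u) (htu : Disjoint t u)
    (hs : a ∈ s ∨ b ∈ s) (ht : a ∈ t ∨ b ∈ t) (hu : a ∈ u ∨ b ∈ u) : False := by
  rw [Set.disjoint_left] at hst hsu htu
  rcases hs with hs | hs <;> rcases ht with ht | ht <;> rcases hu with hu | hu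
  all_goals first | exact hst hs ht | exact hsu hs hu | exact htu ht hu

theorem IsMinor.map {α : Type*} {K : SimpleGraph α} (h : IsMinor K G) (φ : G →g G')
    (hφ : Function.Injective φ) : IsMinor K G' := by
  obtain ⟨f, hconn, hdisj, hadj⟩ := h
  refine ⟨fun a => φ '' f a, fun a => ?_, fun a b hab => (Set.disjoint_image_iff hφ).2 (hdisj hab),
    fun a b hab => ?_⟩
  · let ψ : G.induce (f a) →g G'.induce (φ '' f a) :=
      ⟨fun x => ⟨φ x, x, x.2, rfl⟩, φ.map_adj⟩
    refine (hconn a).map ψ ?_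
    rintro ⟨_, x, hx, rfl⟩
    exact ⟨⟨x, hx⟩, rfl⟩
  · obtain ⟨u, hu, v, hv, huv⟩ := hadj hab
    exact ⟨φ u, Set.mem_image_of_mem φ hu, φ v, Set.mem_image_of_mem φ hv, φ.map_adj huv⟩

theorem IsOuterplanar.of_hom (φ : G →g G') (hφ : Function.Injective φ) (h : IsOuterplanar G') :
    IsOuterplanar G :=
  ⟨fun hK => h.1 (hK.map φ hφ), fun hK => h.2 (hK.map φ hφ)⟩

theorem IsPathVC.comap {k : ℕ} {S : Set W} (hS : IsPathVC G' k S) (φ : G →g G')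
    (hφ : Function.Injective φ) : IsPathVC G k (φ ⁻¹' S) := by
  intro u v w hw hlen
  obtain ⟨x, hx, hxS⟩ := hS (w.map φ) (hw.map hφ) (by rwa [Walk.length_map])
  rw [Walk.support_map, List.mem_map] at hx
  obtain ⟨z, hz, rfl⟩ := hx
  exact ⟨z, hz, hxS⟩

theorem IsPathVC.mem_or_mem_or_mem {S : Set V} (hS : IsPathVC G 3 S) {x y z : V}
    (hxy : G.Adj x y) (hyz : G.Adj y z) (hxz : x ≠ z) : x ∈ S ∨ y ∈ S ∨ z ∈ S := by
  have hw : (Walk.cons hxy (Walk.cons hyz Walk.nil)).IsPath := by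
    simp [Walk.isPath_def, hxy.ne, hyz.ne, hxz]
  obtain ⟨t, ht, htS⟩ := hS _ hw rfl
  simp only [Walk.support_cons, Walk.support_nil, List.mem_cons, List.not_mem_nil,
    or_false] at ht
  rcases ht with rfl | rfl | rfl <;> simp [htS]

theorem le_psi {k m : ℕ} (h : ∀ S, IsPathVC G k S → m ≤ S.ncard) : m ≤ psi G k :=
  le_csInf ⟨_, Set.univ, fun u _ _ _ _ => ⟨u, Walk.start_mem_support _, trivial⟩, rfl⟩
    (by rintro _ ⟨S, hS, rfl⟩; exact h S hS)

/-- What is left contains the Hamiltonian path starting right after `v`. -/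
theorem induce_ne_connected_of_hamiltonian {m : ℕ} [NeZero m] (e : ZMod m ≃ V)
    (he : ∀ k, G.Adj (e k) (e (k + 1))) (v : V) : (G.induce {w | w ≠ v}).Connected := by
  have hm : 1 < m := by
    by_contra h
    obtain rfl : m = 1 := by have := NeZero.ne m; omega
    exact (he 0).ne (congrArg e (Subsingleton.elim _ _))
  set a := e.symm v
  have hne : ∀ j : ℕ, j + 1 < m → e (a + (j + 1 : ℕ)) ≠ v := by
    intro j hj h
    have h0 : ((j + 1 : ℕ) : ZMod m) = 0 := by
      simpa [a] using congrArg e.symm h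
    rw [ZMod.natCast_eq_zero_iff] at h0
    exact absurd (Nat.le_of_dvd j.succ_pos h0) (by omega)
  have reach : ∀ j (hj : j + 1 < m), (G.induce {w | w ≠ v}).Reachable
      ⟨_, hne 0 (by omega)⟩ ⟨_, hne j hj⟩ := by
    intro j hj
    induction j with
    | zero => rfl
    | succ j ih =>
      refine (ih (by omega)).trans (Adj.reachable ?_)
      simpa [add_assoc, one_add_one_eq_two] using he (a + (j + 1 : ℕ))
  refine (connected_iff _).2 ⟨fun u w => ?_, ⟨⟨_, hne 0 (by omega)⟩⟩⟩
  suffices ∀ u : {w | w ≠ v}, (G.induce {w | w ≠ v}).Reachable ⟨_, hne 0 (by omega)⟩ u from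
    (this u).symm.trans (this w)
  rintro ⟨u, hu⟩
  set j := (e.symm u - a - 1).val
  have hj : a + (j + 1 : ℕ) = e.symm u := by
    simp [j]
  have hjm : j + 1 < m := by
    refine lt_of_le_of_ne (ZMod.val_lt _) fun hm => hu ?_
    rw [← e.apply_symm_apply u, ← hj, hm, ZMod.natCast_self, add_zero, e.apply_symm_apply]
  convert reach j hjm
  exact hj ▸ (e.apply_symm_apply u).symm

end General

namespace ZMod

variable {n : ℕ} [NeZero n] {p : ZMod n}

theorem eq_of_val_sub_eq {x y : ZMod n} (h : (x - p).val = (y - p).val) : x = y :=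
  sub_left_injective (val_injective n h)

theorem eq_add_one_of_val_sub_eq_add_one {x y : ZMod n} (h : (x - p).val = (y - p).val + 1) :
    x = y + 1 := by
  have := congrArg (fun k : ℕ => (k : ZMod n)) h
  simp only [natCast_zmod_val, Nat.cast_add, Nat.cast_one] at this
  linear_combination this

theorem val_add_one_sub {x : ZMod n} (hx : x + 1 ≠ p) : (x + 1 - p).val = (x - p).val + 1 := by
  have hlt : (x - p).val + 1 < n := by
    refine lt_of_le_of_ne (val_lt _) fun h => hx ?_
    have := congrArg (fun k : ℕ => (k : ZMod n)) h
    simp only [natCast_zmod_val, Nat.cast_add, Nat.cast_one, natCast_self] at this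
    linear_combination this
  rw [← val_natCast_of_lt hlt]
  congr 1
  push_cast [natCast_zmod_val]
  ring

end ZMod

open Sum

/-- `inl i` is the cycle vertex `v_i`, and `inr i` the vertex `u_i` added on the edge
`v_i v_{i+1}`. -/
def cycleWithEars (n : ℕ) : SimpleGraph (ZMod n ⊕ ZMod n) :=
  SimpleGraph.fromRel fun x y =>
    match x, y with
    | inl i, inl j => j = i + 1
    | inl i, inr j => i = j ∨ i = j + 1
    | inr _, _ => False

namespace cycleWithEars

variable {n : ℕ}

theorem adj_inl_inl {i j : ZMod n} :
    (cycleWithEars n).Adj (inl i) (inl j) ↔ i ≠ j ∧ (j = i + 1 ∨ i = j + 1) := by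
  simp [cycleWithEars]

theorem adj_inl_inr {i m : ZMod n} : (cycleWithEars n).Adj (inl i) (inr m) ↔ i = m ∨ i = m + 1 := by
  simp [cycleWithEars]

theorem adj_inr {m : ZMod n} {y : ZMod n ⊕ ZMod n} :
    (cycleWithEars n).Adj (inr m) y ↔ y = inl m ∨ y = inl (m + 1) := by
  rcases y with j | j <;> simp [cycleWithEars, eq_comm]

theorem adj_inl_inr_self (i : ZMod n) : (cycleWithEars n).Adj (inl i) (inr i) :=
  adj_inl_inr.2 (.inl rfl)

theorem adj_inr_inl_add_one (i : ZMod n) : (cycleWithEars n).Adj (inr i) (inl (i + 1)) :=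
  adj_inr.2 (.inr rfl)

def height (p : ZMod n) : ZMod n ⊕ ZMod n → ℕ
  | inl x => (x - p).val
  | inr x => (x - p).val

@[simp]
theorem height_inl (p x : ZMod n) : height p (inl x) = (x - p).val := rfl

variable {A B C : Set (ZMod n ⊕ ZMod n)}

def IsBoundary (A : Set (ZMod n ⊕ ZMod n)) (i : ZMod n) : Prop :=
  Xor (inl i ∈ A) (inl (i + 1) ∈ A)

def TouchAt (A B : Set (ZMod n ⊕ ZMod n)) (i : ZMod n) : Prop :=
  inl i ∈ A ∧ inl (i + 1) ∈ B ∨ inl i ∈ B ∧ inl (i + 1) ∈ A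

theorem TouchAt.isBoundary {i : ZMod n} (h : TouchAt A B i) (hAB : Disjoint A B) :
    IsBoundary A i := by
  rcases h with ⟨h₁, h₂⟩ | ⟨h₁, h₂⟩
  · exact .inl ⟨h₁, Set.disjoint_right.1 hAB h₂⟩
  · exact .inr ⟨h₂, Set.disjoint_right.1 hAB h₁⟩

theorem TouchAt.false_of_touchAt {i : ZMod n} (hB : TouchAt A B i) (hC : TouchAt A C i)
    (hAB : Disjoint A B) (hAC : Disjoint A C) (hBC : Disjoint B C) : False := by
  rw [Set.disjoint_left] at hAB hAC hBC
  rcases hB with ⟨h₁, h₂⟩ | ⟨h₁, h₂⟩ <;> rcases hC with ⟨h₃, h₄⟩ | ⟨h₃, h₄⟩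
  exacts [hBC h₂ h₄, hAC h₁ h₃, hAB h₃ h₁, hBC h₁ h₃]

theorem touchAt_of_mem {m : ZMod n} (hAB : Disjoint A B) (hA : inl m ∈ A ∨ inl (m + 1) ∈ A)
    (hB : inl m ∈ B ∨ inl (m + 1) ∈ B) : TouchAt A B m := by
  rw [Set.disjoint_left] at hAB
  rcases hA with hA | hA <;> rcases hB with hB | hB
  exacts [(hAB hA hB).elim, .inl ⟨hA, hB⟩, .inr ⟨hB, hA⟩, (hAB hA hB).elim]

theorem inl_mem_or_of_adj_inr {m : ZMod n} {b : ZMod n ⊕ ZMod n}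
    (hab : (cycleWithEars n).Adj (inr m) b) (hb : b ∈ B) : inl m ∈ B ∨ inl (m + 1) ∈ B := by
  rcases adj_inr.1 hab with rfl | rfl
  exacts [.inl hb, .inr hb]

theorem inl_mem_or_of_inr_mem (hA : ((cycleWithEars n).induce A).Connected) {m : ZMod n}
    (hm : inr m ∈ A) {y : ZMod n ⊕ ZMod n} (hy : y ∈ A) (hne : y ≠ inr m) :
    inl m ∈ A ∨ inl (m + 1) ∈ A := by
  obtain ⟨w⟩ := hA.preconnected ⟨inr m, hm⟩ ⟨y, hy⟩
  obtain ⟨⟨⟨⟨a, ha⟩, ⟨b, hb⟩⟩, hab⟩, -, h₁, -⟩ :=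
    w.exists_boundary_dart {⟨inr m, hm⟩} rfl (by simpa using hne)
  obtain rfl : a = inr m := congrArg Subtype.val (Set.mem_singleton_iff.1 h₁)
  exact inl_mem_or_of_adj_inr hab hb

/-- Such an `A` is the single vertex `u_m`. -/
theorem inl_mem_or_of_forall_inl_not_mem (hA : ((cycleWithEars n).induce A).Connected)
    (hno : ∀ i, inl i ∉ A) {m : ZMod n} (hm : inr m ∈ A)
    (hB : ∃ a ∈ A, ∃ b ∈ B, (cycleWithEars n).Adj a b) : inl m ∈ B ∨ inl (m + 1) ∈ B := by
  obtain ⟨a, ha, b, hb, hab⟩ := hB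
  obtain rfl : a = inr m := by
    by_contra hne
    exact (inl_mem_or_of_inr_mem hA hm ha hne).elim (hno _) (hno _)
  exact inl_mem_or_of_adj_inr hab hb

theorem exists_inl_mem_of_adj_three {B₁ B₂ B₃ : Set (ZMod n ⊕ ZMod n)}
    (hA : ((cycleWithEars n).induce A).Connected)
    (h₁₂ : Disjoint B₁ B₂) (h₁₃ : Disjoint B₁ B₃) (h₂₃ : Disjoint B₂ B₃)
    (h₁ : ∃ a ∈ A, ∃ b ∈ B₁, (cycleWithEars n).Adj a b)
    (h₂ : ∃ a ∈ A, ∃ b ∈ B₂, (cycleWithEars n).Adj a b)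
    (h₃ : ∃ a ∈ A, ∃ b ∈ B₃, (cycleWithEars n).Adj a b) : ∃ i, inl i ∈ A := by
  by_contra! hno
  obtain ⟨a, ha, -⟩ := id h₁
  rcases a with i | m
  · exact hno i ha
  · exact Set.false_of_disjoint_of_mem_or_mem h₁₂ h₁₃ h₂₃
      (inl_mem_or_of_forall_inl_not_mem hA hno ha h₁)
      (inl_mem_or_of_forall_inl_not_mem hA hno ha h₂)
      (inl_mem_or_of_forall_inl_not_mem hA hno ha h₃)

theorem exists_touchAt (hA : ((cycleWithEars n).induce A).Connected)
    (hB : ((cycleWithEars n).induce B).Connected) (hAB : Disjoint A B)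
    (hAi : ∃ i, inl i ∈ A) (hBi : ∃ i, inl i ∈ B) {a b : ZMod n ⊕ ZMod n} (ha : a ∈ A) (hb : b ∈ B)
    (hab : (cycleWithEars n).Adj a b) : ∃ i, TouchAt A B i := by
  rcases a with i | m <;> rcases b with j | m'
  · obtain ⟨-, rfl | rfl⟩ := adj_inl_inl.1 hab
    exacts [⟨i, .inl ⟨ha, hb⟩⟩, ⟨j, .inr ⟨hb, ha⟩⟩]
  · obtain ⟨j, hj⟩ := hBi
    exact ⟨m', touchAt_of_mem hAB (inl_mem_or_of_adj_inr hab.symm ha)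
      (inl_mem_or_of_inr_mem hB hb hj (by simp))⟩
  · obtain ⟨i, hi⟩ := hAi
    exact ⟨m, touchAt_of_mem hAB (inl_mem_or_of_inr_mem hA ha hi (by simp))
      (inl_mem_or_of_adj_inr hab hb)⟩
  · simp [adj_inr] at hab

/-- If `B` has no cycle vertex it is a single `u_i`, whose neighbours `v_i`, `v_{i+1}` are
shared by `A₀` and `A₁`. -/
theorem exists_touchAt_or_inr_mem {A₀ A₁ : Set (ZMod n ⊕ ZMod n)}
    (hA₀ : ((cycleWithEars n).induce A₀).Connected)
    (hB : ((cycleWithEars n).induce B).Connected) (hA : Disjoint A₀ A₁) (hA₀B : Disjoint A₀ B)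
    (hA₀i : ∃ i, inl i ∈ A₀) (h₀ : ∃ a ∈ A₀, ∃ b ∈ B, (cycleWithEars n).Adj a b)
    (h₁ : ∃ a ∈ A₁, ∃ b ∈ B, (cycleWithEars n).Adj a b) :
    ∃ i, TouchAt A₀ B i ∨ (inr i ∈ B ∧ TouchAt A₀ A₁ i) := by
  obtain ⟨a, ha, b, hb, hab⟩ := id h₀
  by_cases hBi : ∃ i, inl i ∈ B
  · exact (exists_touchAt hA₀ hB hA₀B hA₀i hBi ha hb hab).imp fun _ => .inl
  simp only [not_exists] at hBi
  rcases b with i | m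
  · exact (hBi i hb).elim
  have hB' : ∀ {A}, (∃ a ∈ A, ∃ b ∈ B, (cycleWithEars n).Adj a b) →
      inl m ∈ A ∨ inl (m + 1) ∈ A := fun ⟨a, ha, b, hb, hab⟩ =>
    inl_mem_or_of_forall_inl_not_mem hB hBi ‹_› ⟨b, hb, a, ha, hab.symm⟩
  exact ⟨m, .inr ⟨hb, touchAt_of_mem hA (hB' h₀) (hB' h₁)⟩⟩

section Outerplanar

variable [NeZero n] {p : ZMod n}

theorem height_le_or_eq_add_one {a b : ZMod n ⊕ ZMod n} (hab : (cycleWithEars n).Adj a b)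
    (ha : a ≠ inl p) (hb : b ≠ inl p) :
    height p b ≤ height p a ∨ ∃ x, b = inl x ∧ height p b = height p a + 1 := by
  rcases a with i | m <;> rcases b with j | j
  · obtain ⟨-, rfl | rfl⟩ := adj_inl_inl.1 hab
    · exact .inr ⟨_, rfl, ZMod.val_add_one_sub fun h => hb (h ▸ rfl)⟩
    · exact .inl (by simp [height, ZMod.val_add_one_sub fun h => ha (h ▸ rfl)])
  · rcases adj_inl_inr.1 hab with rfl | rfl
    · exact .inl le_rfl
    · exact .inl (by simp [height, ZMod.val_add_one_sub fun h => ha (h ▸ rfl)])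
  · rcases adj_inr.1 hab with h | h <;> obtain rfl := inl_injective h
    · exact .inl le_rfl
    · exact .inr ⟨_, rfl, ZMod.val_add_one_sub fun h => hb (h ▸ rfl)⟩
  · simp [adj_inr] at hab

theorem height_le_of_right_end (hA : ((cycleWithEars n).induce A).Connected) (hp : inl p ∉ A)
    {i : ZMod n} (hi : inl i ∈ A) (hi' : inl (i + 1) ∉ A) {y : ZMod n ⊕ ZMod n} (hy : y ∈ A) :
    height p y ≤ (i - p).val := by
  by_contra hlt
  obtain ⟨w⟩ := hA.preconnected ⟨inl i, hi⟩ ⟨y, hy⟩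
  obtain ⟨⟨⟨⟨a, ha⟩, ⟨b, hb⟩⟩, hab⟩, -, hd₁, hd₂⟩ := w.exists_boundary_dart
    {z | height p z.1 ≤ (i - p).val} (show height p (inl i) ≤ _ from le_rfl) hlt
  simp only [Set.mem_ofPred_eq] at hd₁ hd₂
  rcases height_le_or_eq_add_one (show (cycleWithEars n).Adj a b from hab)
    (ne_of_mem_of_not_mem ha hp) (ne_of_mem_of_not_mem hb hp) with h | ⟨x, rfl, h⟩
  · exact hd₂ (h.trans hd₁)
  · simp only [height_inl] at h hd₂
    exact hi' (ZMod.eq_add_one_of_val_sub_eq_add_one (p := p) (x := x) (y := i) (by omega) ▸ hb)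

theorem lt_val_sub_of_left_end (hA : ((cycleWithEars n).induce A).Connected) (hp : inl p ∉ A)
    {j : ZMod n} (hj : inl j ∉ A) (hj' : inl (j + 1) ∈ A) {x : ZMod n} (hx : inl x ∈ A) :
    (j - p).val < (x - p).val := by
  suffices h : ∀ y ∈ A, (j - p).val ≤ height p y by
    refine lt_of_le_of_ne (h _ hx) fun he => hj ?_
    rwa [ZMod.eq_of_val_sub_eq he]
  intro y hy
  by_contra hlt
  obtain ⟨w⟩ := hA.preconnected ⟨y, hy⟩ ⟨inl (j + 1), hj'⟩
  have hj₁ : height p (inl (j + 1)) = (j - p).val + 1 :=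
    ZMod.val_add_one_sub fun h => hp (h ▸ hj')
  obtain ⟨⟨⟨⟨a, ha⟩, ⟨b, hb⟩⟩, hab⟩, -, hd₁, hd₂⟩ := w.exists_boundary_dart
    {z | height p z.1 < (j - p).val} (not_le.1 hlt) (by simp [hj₁])
  simp only [Set.mem_ofPred_eq] at hd₁ hd₂
  rcases height_le_or_eq_add_one (show (cycleWithEars n).Adj a b from hab)
    (ne_of_mem_of_not_mem ha hp) (ne_of_mem_of_not_mem hb hp) with h | ⟨x, rfl, h⟩
  · exact hd₂ (h.trans_lt hd₁)
  · simp only [height_inl] at h hd₂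
    exact hj (ZMod.eq_of_val_sub_eq (p := p) (x := x) (y := j) (by omega) ▸ hb)

/-- A connected set missing `v_p` meets the cycle in an arc, which has only two boundary edges. -/
theorem false_of_three_isBoundary (hA : ((cycleWithEars n).induce A).Connected) (hp : inl p ∉ A)
    {i j k : ZMod n} (hij : i ≠ j) (hik : i ≠ k) (hjk : j ≠ k)
    (hi : IsBoundary A i) (hj : IsBoundary A j) (hk : IsBoundary A k) : False := by
  have R : ∀ {i j : ZMod n}, inl i ∈ A ∧ inl (i + 1) ∉ A → inl j ∈ A ∧ inl (j + 1) ∉ A → i = j := by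
    rintro i j ⟨hi, hi'⟩ ⟨hj, hj'⟩
    exact ZMod.eq_of_val_sub_eq (p := p) (le_antisymm
      (height_le_of_right_end hA hp hj hj' hi) (height_le_of_right_end hA hp hi hi' hj))
  have L : ∀ {i j : ZMod n}, inl (i + 1) ∈ A ∧ inl i ∉ A → inl (j + 1) ∈ A ∧ inl j ∉ A → i = j := by
    rintro i j ⟨hi', hi⟩ ⟨hj', hj⟩
    have h₁ := lt_val_sub_of_left_end hA hp hi hi' hj'
    have h₂ := lt_val_sub_of_left_end hA hp hj hj' hi'
    rw [ZMod.val_add_one_sub (by rintro rfl; exact hp hj')] at h₁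
    rw [ZMod.val_add_one_sub (by rintro rfl; exact hp hi')] at h₂
    exact ZMod.eq_of_val_sub_eq (p := p) (by omega)
  rcases hi with hi | hi <;> rcases hj with hj | hj <;> rcases hk with hk | hk
  all_goals first
    | exact hij (R hi hj) | exact hik (R hi hk) | exact hjk (R hj hk)
    | exact hij (L hi hj) | exact hik (L hi hk) | exact hjk (L hj hk)

theorem not_isMinor_completeGraph_four : ¬ IsMinor (completeGraph (Fin 4)) (cycleWithEars n) := by
  rintro ⟨f, hconn, hdisj, hadj⟩
  have hd : ∀ {a b : Fin 4}, a ≠ b → Disjoint (f a) (f b) := fun h => hdisj h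
  have ha : ∀ {a b : Fin 4}, a ≠ b → ∃ u ∈ f a, ∃ v ∈ f b, (cycleWithEars n).Adj u v :=
    fun h => hadj h
  have hinl : ∀ a, ∃ i, inl i ∈ f a := by
    intro a
    obtain ⟨b, c, d, hab, hac, had, hbc, hbd, hcd⟩ :
        ∃ b c d : Fin 4, a ≠ b ∧ a ≠ c ∧ a ≠ d ∧ b ≠ c ∧ b ≠ d ∧ c ≠ d := by
      revert a; decide
    exact exists_inl_mem_of_adj_three (hconn a) (hd hbc) (hd hbd) (hd hcd)
      (ha hab) (ha hac) (ha had)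
  obtain ⟨p, hp⟩ := hinl 1
  have touch : ∀ t : Fin 4, t ≠ 0 → ∃ i, TouchAt (f 0) (f t) i := fun t ht =>
    let ⟨_, hu, _, hv, huv⟩ := ha ht.symm
    exists_touchAt (hconn 0) (hconn t) (hd ht.symm) (hinl 0) (hinl t) hu hv huv
  obtain ⟨i₁, h₁⟩ := touch 1 (by decide)
  obtain ⟨i₂, h₂⟩ := touch 2 (by decide)
  obtain ⟨i₃, h₃⟩ := touch 3 (by decide)
  refine false_of_three_isBoundary (hconn 0) (Set.disjoint_right.1 (hd (by decide)) hp)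
    ?_ ?_ ?_ (h₁.isBoundary (hd (by decide))) (h₂.isBoundary (hd (by decide)))
    (h₃.isBoundary (hd (by decide)))
  · rintro rfl; exact h₁.false_of_touchAt h₂ (hd (by decide)) (hd (by decide)) (hd (by decide))
  · rintro rfl; exact h₁.false_of_touchAt h₃ (hd (by decide)) (hd (by decide)) (hd (by decide))
  · rintro rfl; exact h₂.false_of_touchAt h₃ (hd (by decide)) (hd (by decide)) (hd (by decide))

theorem not_isMinor_completeBipartiteGraph_two_three :
    ¬ IsMinor (completeBipartiteGraph (Fin 2) (Fin 3)) (cycleWithEars n) := by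
  rintro ⟨f, hconn, hdisj, hadj⟩
  set A : Fin 2 → Set (ZMod n ⊕ ZMod n) := fun s => f (.inl s)
  set B : Fin 3 → Set (ZMod n ⊕ ZMod n) := fun j => f (.inr j)
  have hAA : Disjoint (A 0) (A 1) := hdisj (by decide)
  have hAB : ∀ s j, Disjoint (A s) (B j) := fun s j => hdisj (by simp)
  have hBB : ∀ {j k}, j ≠ k → Disjoint (B j) (B k) := fun h => hdisj (by simpa using h)
  have hadj' : ∀ s j, ∃ u ∈ A s, ∃ v ∈ B j, (cycleWithEars n).Adj u v := fun s j => hadj (by simp)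
  have hinl : ∀ s, ∃ i, inl i ∈ A s := fun s =>
    exists_inl_mem_of_adj_three (hconn _) (hBB (by decide : (0 : Fin 3) ≠ 1))
      (hBB (by decide : (0 : Fin 3) ≠ 2)) (hBB (by decide : (1 : Fin 3) ≠ 2))
      (hadj' s 0) (hadj' s 1) (hadj' s 2)
  obtain ⟨p, hp⟩ := hinl 1
  have touch : ∀ j, ∃ i, TouchAt (A 0) (B j) i ∨ (inr i ∈ B j ∧ TouchAt (A 0) (A 1) i) :=
    fun j => exists_touchAt_or_inr_mem (hconn _) (hconn _) hAA (hAB 0 j) (hinl 0)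
      (hadj' 0 j) (hadj' 1 j)
  choose i hi using touch
  have hne : ∀ {j k}, j ≠ k → i j ≠ i k := by
    intro j k hjk heq
    rcases hi j with hj | ⟨hj, hj'⟩ <;> rcases hi k with hk | ⟨hk, hk'⟩ <;> rw [← heq] at hk
    · exact hj.false_of_touchAt hk (hAB 0 j) (hAB 0 k) (hBB hjk)
    · exact hj.false_of_touchAt (heq ▸ hk') (hAB 0 j) hAA (hAB 1 j).symm
    · exact hk.false_of_touchAt hj' (hAB 0 k) hAA (hAB 1 k).symm
    · exact Set.disjoint_left.1 (hBB hjk) hj hk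
  have hbd : ∀ j, IsBoundary (A 0) (i j) := fun j =>
    (hi j).elim (·.isBoundary (hAB 0 j)) (·.2.isBoundary hAA)
  exact false_of_three_isBoundary (hconn _) (Set.disjoint_right.1 hAA hp)
    (hne (by decide : (0 : Fin 3) ≠ 1)) (hne (by decide : (0 : Fin 3) ≠ 2))
    (hne (by decide : (1 : Fin 3) ≠ 2)) (hbd 0) (hbd 1) (hbd 2)

theorem isOuterplanar : IsOuterplanar (cycleWithEars n) :=
  ⟨not_isMinor_completeGraph_four, not_isMinor_completeBipartiteGraph_two_three⟩

end Outerplanar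

section Cover

variable [Fact (1 < n)]

theorem adj_inl_add_one (i : ZMod n) : (cycleWithEars n).Adj (inl i) (inl (i + 1)) :=
  adj_inl_inl.2 ⟨by simp, .inl rfl⟩

/-- The complement `T` of a `3`-path vertex cover injects into `ZMod n`: `v_i ↦ i`, and
`u_i ↦ i`, or `i - 1` when `v_i ∈ T`; a collision would put a path `v_{i-1} v_i u_i` or
`u_{i-1} v_i u_i` inside `T`. -/
theorem ncard_compl_le_of_isPathVC {S : Set (ZMod n ⊕ ZMod n)}
    (hS : IsPathVC (cycleWithEars n) 3 S) : Sᶜ.ncard ≤ n := by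
  classical
  let g : ZMod n ⊕ ZMod n → ZMod n := Sum.elim id fun i => if inl i ∈ S then i else i - 1
  have hg : Set.InjOn g Sᶜ := by
    rintro (i | i) hx (j | j) hy hxy <;>
      simp only [g, Sum.elim_inl, Sum.elim_inr, id, Set.mem_compl_iff] at hx hy hxy
    · rw [hxy]
    · split_ifs at hxy with hj
      · exact (hx (hxy ▸ hj)).elim
      · obtain rfl : j = i + 1 := by rw [hxy]; ring
        simpa [hx, hj, hy] using
          hS.mem_or_mem_or_mem (adj_inl_add_one i) (adj_inl_inr_self _) (by simp)
    · split_ifs at hxy with hi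
      · exact (hy (hxy ▸ hi)).elim
      · obtain rfl : i = j + 1 := by rw [← hxy]; ring
        simpa [hx, hi, hy] using
          hS.mem_or_mem_or_mem (adj_inl_add_one j) (adj_inl_inr_self _) (by simp)
    · split_ifs at hxy with hi hj hj
      · rw [hxy]
      · obtain rfl : j = i + 1 := by rw [hxy]; ring
        simpa [hx, hj, hy] using
          hS.mem_or_mem_or_mem (adj_inr_inl_add_one i) (adj_inl_inr_self _) (by simp)
      · obtain rfl : i = j + 1 := by rw [← hxy]; ring
        simpa [hx, hi, hy] using
          hS.mem_or_mem_or_mem (adj_inr_inl_add_one j) (adj_inl_inr_self _) (by simp)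
      · rw [sub_left_injective hxy]
  calc Sᶜ.ncard ≤ (Set.univ : Set (ZMod n)).ncard :=
        Set.ncard_le_ncard_of_injOn g (fun _ _ => trivial) hg
    _ = n := by simp

theorem le_ncard_of_isPathVC {S : Set (ZMod n ⊕ ZMod n)} (hS : IsPathVC (cycleWithEars n) 3 S) :
    n ≤ S.ncard := by
  have := Set.ncard_add_ncard_compl S
  rw [Nat.card_sum, Nat.card_zmod] at this
  have := ncard_compl_le_of_isPathVC hS
  omega

end Cover

def cycleVertex (n a : ℕ) : ZMod n ⊕ ZMod n :=
  if a % 2 = 0 then inl (a / 2 : ℕ) else inr (a / 2 : ℕ)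

theorem cycleVertex_mod (a : ℕ) : cycleVertex n (a % (2 * n)) = cycleVertex n a := by
  have h₁ : a % (2 * n) % 2 = a % 2 := Nat.mod_mod_of_dvd a (dvd_mul_right 2 n)
  have h₂ : ((a % (2 * n) / 2 : ℕ) : ZMod n) = (a / 2 : ℕ) := by
    rw [Nat.mod_mul_right_div_self, ZMod.natCast_mod]
  simp only [cycleVertex, h₁, h₂]

theorem cycleVertex_injOn : Set.InjOn (cycleVertex n) (Set.Iio (2 * n)) := by
  intro a ha b hb h
  simp only [Set.mem_Iio] at ha hb
  have half : ((a / 2 : ℕ) : ZMod n) = (b / 2 : ℕ) → a / 2 = b / 2 := by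
    rw [ZMod.natCast_eq_natCast_iff', Nat.mod_eq_of_lt (by omega), Nat.mod_eq_of_lt (by omega)]
    exact id
  unfold cycleVertex at h
  split_ifs at h <;> simp only [inl.injEq, inr.injEq] at h <;> have := half h <;> omega

theorem adj_cycleVertex [Fact (1 < n)] (a : ℕ) :
    (cycleWithEars n).Adj (cycleVertex n a) (cycleVertex n (a + 1)) := by
  rcases Nat.even_or_odd' a with ⟨b, rfl | rfl⟩
  · have h : (2 * b + 1) / 2 = b := by omega
    simpa [cycleVertex, h] using adj_inl_inr_self (b : ZMod n)
  · have h : (2 * b + 1) / 2 = b := by omega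
    have h' : (2 * b + 1 + 1) / 2 = b + 1 := by omega
    simpa [cycleVertex, h, h', Nat.add_mod] using adj_inr_inl_add_one (b : ZMod n)

noncomputable def hamiltonianCycle (n : ℕ) [NeZero n] : ZMod (2 * n) ≃ ZMod n ⊕ ZMod n :=
  Equiv.ofBijective (fun k => cycleVertex n k.val) <|
    (Fintype.bijective_iff_injective_and_card _).2
      ⟨fun k l h => ZMod.val_injective _ (cycleVertex_injOn (ZMod.val_lt k) (ZMod.val_lt l) h),
        by simp [two_mul]⟩

theorem adj_hamiltonianCycle [Fact (1 < n)] (k : ZMod (2 * n)) :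
    (cycleWithEars n).Adj (hamiltonianCycle n k) (hamiltonianCycle n (k + 1)) := by
  have hk : k + 1 = ((k.val + 1 : ℕ) : ZMod (2 * n)) := by simp
  rw [hk]
  simpa only [hamiltonianCycle, Equiv.ofBijective_apply, ZMod.val_natCast, cycleVertex_mod]
    using adj_cycleVertex k.val

end cycleWithEars

theorem outerplanar_bound_tight (n : ℕ) (hn : 3 ≤ n) :
    ∃ H : SimpleGraph (Fin (2 * n)), IsTwoConnected H ∧ IsOuterplanar H ∧ n ≤ psi H 3 := by
  have : Fact (1 < n) := ⟨by omega⟩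
  let e : Fin (2 * n) ≃ ZMod n ⊕ ZMod n :=
    (ZMod.finEquiv (2 * n)).toEquiv.trans (cycleWithEars.hamiltonianCycle n)
  let φ : (cycleWithEars n).comap e ≃g cycleWithEars n := Iso.comap e _
  refine ⟨(cycleWithEars n).comap e, ⟨by rw [Fintype.card_fin]; omega, ?_⟩,
    cycleWithEars.isOuterplanar.of_hom φ.toHom φ.injective, le_psi fun S hS => ?_⟩
  · refine induce_ne_connected_of_hamiltonian (ZMod.finEquiv (2 * n)).toEquiv.symm fun k => ?_
    simpa [e] using cycleWithEars.adj_hamiltonianCycle k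
  · have := cycleWithEars.le_ncard_of_isPathVC (hS.comap φ.symm.toHom φ.symm.injective)
    exact this.trans_eq (Set.ncard_preimage_of_injective_subset_range φ.symm.injective (by simp))
end

section
/- If s and t are non-negative integers and G is a graph with maximum degree at most s + t + 1, then V(G) can be partitioned into two sets A and B such that the subgraph induced by A has maximum degree at most s and the subgraph induced by B has maximum degree at most t. -/
open SimpleGraph

variable {V : Type*}

set_option linter.unusedSectionVars false

section Aux
variable [Fintype V] [DecidableEq V] (G : SimpleGraph V) [DecidableRel G.Adj]

/-- internal degree of `v` in `A` -/
def cdeg (v : V) (A : Finset V) : ℕ := (A.filter (G.Adj v)).card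

/-- sum of internal degrees -/
def Fsum (A : Finset V) : ℕ := ∑ u ∈ A, cdeg G u A

lemma Fsum_insert {v : V} {B : Finset V} (hv : v ∉ B) :
    Fsum G (insert v B) = Fsum G B + 2 * cdeg G v B := by
  unfold Fsum
  rw [Finset.sum_insert hv]
  have h1 : cdeg G v (insert v B) = cdeg G v B := by
    unfold cdeg
    rw [Finset.filter_insert]
    simp [G.irrefl]
  have h2 : ∀ u ∈ B, cdeg G u (insert v B) = cdeg G u B + (if G.Adj u v then 1 else 0) := by
    intro u hu
    unfold cdeg
    rw [Finset.filter_insert]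
    split <;> rename_i hadj
    · rw [Finset.card_insert_of_notMem (fun hmem => hv (Finset.mem_filter.mp hmem).1)]
    · simp [fun hh => hadj (G.adj_symm hh)]
  rw [Finset.sum_congr rfl h2, Finset.sum_add_distrib, ← Finset.card_filter]
  have h3 : (B.filter (fun u => G.Adj u v)).card = cdeg G v B := by
    unfold cdeg
    congr 1
    ext u
    simp [G.adj_comm]
  rw [h1, h3]; ring

lemma Fsum_erase {v : V} {A : Finset V} (hv : v ∈ A) :
    Fsum G A = Fsum G (A.erase v) + 2 * cdeg G v A := by
  have h1 : cdeg G v (A.erase v) = cdeg G v A := by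
    unfold cdeg
    rw [Finset.filter_erase, Finset.erase_eq_of_notMem (by simp [G.irrefl])]
  conv_lhs => rw [← Finset.insert_erase hv]
  rw [Fsum_insert G (Finset.notMem_erase v A), h1]

lemma cdeg_add_cdeg_compl (v : V) (A : Finset V) :
    cdeg G v A + cdeg G v Aᶜ = G.degree v := by
  unfold cdeg
  rw [← Finset.card_union_of_disjoint
    (Finset.disjoint_filter_filter disjoint_compl_right),
    ← Finset.filter_union, Finset.union_compl]
  unfold SimpleGraph.degree
  congr 1
  ext w
  simp

theorem lovasz_partition' (s t : ℕ) (h : G.maxDegree ≤ s + t + 1) :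
    ∃ A : Set V, (∀ v ∈ A, {w ∈ A | G.Adj v w}.ncard ≤ s) ∧
      (∀ v ∈ Aᶜ, {w ∈ Aᶜ | G.Adj v w}.ncard ≤ t) := by
  set g : Finset V → ℕ := fun A => (t+1) * Fsum G A + (s+1) * Fsum G Aᶜ with hg
  obtain ⟨A, -, hmin⟩ := Finset.exists_min_image (Finset.univ : Finset (Finset V)) g
    ⟨∅, Finset.mem_univ _⟩
  have hdeg : ∀ v : V, cdeg G v A + cdeg G v Aᶜ ≤ s + t + 1 := fun v =>
    (cdeg_add_cdeg_compl G v A).le.trans ((G.degree_le_maxDegree v).trans h)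
  have hA : ∀ v ∈ A, cdeg G v A ≤ s := by
    intro v hv
    by_contra hc
    push_neg at hc
    have hkey : g A ≤ g (A.erase v) := hmin _ (Finset.mem_univ _)
    have e1 : Fsum G A = Fsum G (A.erase v) + 2 * cdeg G v A := Fsum_erase G hv
    have e2 : Fsum G (A.erase v)ᶜ = Fsum G Aᶜ + 2 * cdeg G v Aᶜ := by
      rw [Finset.compl_erase]
      exact Fsum_insert G (by simp [hv])
    rw [hg] at hkey
    simp only [e1, e2] at hkey
    have h1 := hdeg v
    nlinarith [hkey, hc, h1]
  have hB : ∀ v ∈ Aᶜ, cdeg G v Aᶜ ≤ t := by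
    intro v hv
    by_contra hc
    push_neg at hc
    have hkey : g A ≤ g (insert v A) := hmin _ (Finset.mem_univ _)
    have hvA : v ∉ A := by simpa using hv
    have e1 : Fsum G (insert v A) = Fsum G A + 2 * cdeg G v A := Fsum_insert G hvA
    have e2 : Fsum G Aᶜ = Fsum G (insert v A)ᶜ + 2 * cdeg G v Aᶜ := by
      rw [Finset.compl_insert]
      exact Fsum_erase G hv
    rw [hg] at hkey
    simp only [e1, e2] at hkey
    have h1 := hdeg v
    nlinarith [hkey, hc, h1]
  refine ⟨↑A, ?_, ?_⟩
  · intro v hv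
    have : {w ∈ (↑A : Set V) | G.Adj v w} = ↑(A.filter (G.Adj v)) := by
      ext w; simp
    rw [this, Set.ncard_coe_finset]
    exact hA v (by simpa using hv)
  · intro v hv
    have hc : (↑A : Set V)ᶜ = ↑(Aᶜ) := by rw [Finset.coe_compl]
    have : {w ∈ (↑A : Set V)ᶜ | G.Adj v w} = ↑(Aᶜ.filter (G.Adj v)) := by
      rw [hc]; ext w; simp
    rw [this, Set.ncard_coe_finset]
    exact hB v (Finset.mem_coe.mp (by rw [← hc]; exact hv))

end Aux

theorem lovasz_partition [Fintype V] (G : SimpleGraph V) [DecidableRel G.Adj]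
    (s t : ℕ) (h : G.maxDegree ≤ s + t + 1) :
    ∃ A : Set V, (∀ v ∈ A, {w ∈ A | G.Adj v w}.ncard ≤ s) ∧
      (∀ v ∈ Aᶜ, {w ∈ Aᶜ | G.Adj v w}.ncard ≤ t) := by
  have := Classical.decEq V
  exact lovasz_partition' G s t h
end

section
/- For any graph G of maximum degree Δ and any positive integer k, the vertex set of G can be partitioned into k sets each of which induces a subgraph of maximum degree at most ⌈(Δ+1)/k⌉ − 1. -/
open SimpleGraph

variable {V : Type*}

theorem lovasz_partition_k [Fintype V] (G : SimpleGraph V) [DecidableRel G.Adj]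
    (k : ℕ) (hk : 1 ≤ k) :
    ∃ f : V → Fin k, ∀ v : V,
      {w | f w = f v ∧ G.Adj v w}.ncard ≤ (G.maxDegree + k) / k - 1 := by
  classical
  haveI : Nonempty (Fin k) := ⟨⟨0, hk⟩⟩
  set N : (V → Fin k) → V → Fin k → ℕ :=
    fun f v c => (Finset.univ.filter (fun w => f w = c ∧ G.Adj v w)).card with hN
  set I : (V → Fin k) → V → V → ℕ :=
    fun h u w => if h w = h u ∧ G.Adj u w then 1 else 0 with hI
  set W : (V → Fin k) → ℕ := fun f => ∑ v, N f v (f v) with hW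
  obtain ⟨f, -, hf⟩ := Finset.exists_min_image (Finset.univ : Finset (V → Fin k)) W
    ⟨Classical.arbitrary _, Finset.mem_univ _⟩
  refine ⟨f, fun v => ?_⟩
  have hWsum : ∀ h : V → Fin k, W h = ∑ u, ∑ w, I h u w := by
    intro h
    refine Finset.sum_congr rfl fun u _ => ?_
    simp [hN, hI]
  have symmI : ∀ (h : V → Fin k) (u w : V), I h u w = I h w u := by
    intro h u w
    simp only [hI]
    exact if_congr (and_congr eq_comm (G.adj_comm u w)) rfl rfl
  have esum : ∀ t : V → V → ℕ,
      (∑ u, ∑ w, (if u = v then t u w else 0)) = ∑ w, t v w := by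
    intro t
    rw [Finset.sum_comm]
    refine Finset.sum_congr rfl fun w _ => ?_
    simp
  have esum2 : ∀ t : V → V → ℕ,
      (∑ u, ∑ w, (if w = v then t u w else 0)) = ∑ u, t u v := by
    intro t
    refine Finset.sum_congr rfl fun u _ => ?_
    simp
  have a1 : ∑ w, I f v w = N f v (f v) := by
    simp only [hN, hI, Finset.card_filter]
  have a2 : ∑ u, I f u v = N f v (f v) := by
    rw [← a1]
    exact Finset.sum_congr rfl fun u _ => symmI f u v
  -- key claim: same-color degree of v is ≤ its degree into any color class
  have key : ∀ c : Fin k, N f v (f v) ≤ N f v c := by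
    intro c
    set g := Function.update f v c with hg
    have hmin : W f ≤ W g := hf g (Finset.mem_univ g)
    have hgv : g v = c := Function.update_self v c f
    have hgne : ∀ w : V, w ≠ v → g w = f w := fun w hw => Function.update_of_ne hw c f
    have b1 : ∑ w, I g v w = N f v c := by
      have : ∀ w : V, I g v w = if f w = c ∧ G.Adj v w then 1 else 0 := by
        intro w
        by_cases hw : w = v
        · subst hw; simp [hI, G.irrefl]
        · simp [hI, hgne w hw, hgv]
      rw [Finset.sum_congr rfl fun w _ => this w]
      simp only [hN, Finset.card_filter]
    have b2 : ∑ u, I g u v = N f v c := by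
      rw [← b1]
      exact Finset.sum_congr rfl fun u _ => symmI g u v
    have hpt : ∀ u w : V,
        I g u w + ((if u = v then I f u w else 0) + (if w = v then I f u w else 0))
        = I f u w + ((if u = v then I g u w else 0) + (if w = v then I g u w else 0)) := by
      intro u w
      by_cases hu : u = v <;> by_cases hw : w = v
      · subst hu; subst hw; simp [hI, G.irrefl]
      · subst hu; simp [hw]; omega
      · subst hw; simp [hu]; omega
      · have e : I g u w = I f u w := by simp [hI, hgne u hu, hgne w hw]
        simp [hu, hw, e]
    have hsum : (∑ u, ∑ w, (I g u w
          + ((if u = v then I f u w else 0) + (if w = v then I f u w else 0))))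
        = ∑ u, ∑ w, (I f u w
          + ((if u = v then I g u w else 0) + (if w = v then I g u w else 0))) :=
      Finset.sum_congr rfl fun u _ => Finset.sum_congr rfl fun w _ => hpt u w
    simp only [Finset.sum_add_distrib] at hsum
    rw [esum (fun u w => I f u w), esum2 (fun u w => I f u w),
        esum (fun u w => I g u w), esum2 (fun u w => I g u w),
        a1, a2, b1, b2, ← hWsum f, ← hWsum g] at hsum
    omega
  have hk' : 0 < k := hk
  have hdeg : ∑ c : Fin k, N f v c = G.degree v := by
    rw [SimpleGraph.degree,
      Finset.card_eq_sum_card_fiberwise (f := f) (t := Finset.univ)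
        (fun x _ => Finset.mem_univ (f x))]
    refine Finset.sum_congr rfl fun c _ => ?_
    simp only [hN]
    congr 1
    ext w
    simp [and_comm]
  have hle : N f v (f v) * k ≤ G.maxDegree := by
    calc N f v (f v) * k = ∑ _c : Fin k, N f v (f v) := by
          simp [Finset.sum_const, mul_comm]
      _ ≤ ∑ c : Fin k, N f v c := Finset.sum_le_sum fun c _ => key c
      _ = G.degree v := hdeg
      _ ≤ G.maxDegree := G.degree_le_maxDegree v
  have hfinal : N f v (f v) ≤ G.maxDegree / k := (Nat.le_div_iff_mul_le hk').mpr hle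
  have hset : {w | f w = f v ∧ G.Adj v w}
      = ↑(Finset.univ.filter fun w => f w = f v ∧ G.Adj v w) := by
    ext w; simp
  rw [hset, Set.ncard_coe_finset, Nat.add_div_right _ hk']
  simpa [hN] using hfinal
end

section
/- For every graph G of maximum degree Δ, ψ_3(G) ≤ (⌈(Δ−1)/2⌉ / ⌈(Δ+1)/2⌉)·|V(G)|. -/
open SimpleGraph Finset

section partition
variable {V : Type*} [Fintype V] [DecidableEq V] (G : SimpleGraph V) [DecidableRel G.Adj]

/-- number of neighbors of `v` having the same color as `v`. -/
def monoNbrs {d : ℕ} (f : V → Fin d) (v : V) : ℕ :=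
  ((G.neighborFinset v).filter (fun u => f u = f v)).card

def wt {d : ℕ} (f : V → Fin d) : ℕ := ∑ v, monoNbrs G f v

lemma exists_good_coloring {d : ℕ} (hd : 1 ≤ d)
    (hdeg : ∀ v : V, G.degree v + 1 ≤ 2 * d) :
    ∃ f : V → Fin d, ∀ v, monoNbrs G f v ≤ 1 := by
  obtain ⟨f, -, hf⟩ := Finset.exists_min_image (Finset.univ : Finset (V → Fin d)) (wt G)
    ⟨fun _ => ⟨0, hd⟩, mem_univ _⟩
  refine ⟨f, fun v => ?_⟩
  by_contra hv
  push_neg at hv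
  set cnt : Fin d → ℕ := fun j => ((G.neighborFinset v).filter (fun u => f u = j)).card with hcnt
  have hsum : ∑ j : Fin d, cnt j = G.degree v :=
    (Finset.card_eq_sum_card_fiberwise (fun x _ => mem_univ (f x))).symm
  have hex : ∃ i : Fin d, cnt i ≤ 1 := by
    by_contra h
    push_neg at h
    have : 2 * d ≤ ∑ j : Fin d, cnt j := by
      calc 2 * d = ∑ _j : Fin d, 2 := by simp [mul_comm]
      _ ≤ ∑ j : Fin d, cnt j := Finset.sum_le_sum (fun j _ => h j)
    have := hdeg v
    omega
  obtain ⟨i, hi⟩ := hex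
  set g : V → Fin d := Function.update f v i with hg
  have hgv : g v = i := Function.update_self v i f
  have hgne : ∀ w, w ≠ v → g w = f w := fun w hw => Function.update_of_ne hw i f
  -- pointwise accounting
  have key : ∀ u : V, monoNbrs G g u
        + ((if u ∈ G.neighborFinset v then (if f v = f u then 1 else 0) else 0)
          + (if u = v then cnt (f v) else 0))
      = monoNbrs G f u
        + ((if u ∈ G.neighborFinset v then (if i = f u then 1 else 0) else 0)
          + (if u = v then cnt i else 0)) := by
    intro u
    by_cases huv : u = v
    · subst huv
      have hnm : u ∉ G.neighborFinset u := by simp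
      have h1 : monoNbrs G g u = cnt i := by
        unfold monoNbrs
        rw [hgv]
        refine congrArg Finset.card (Finset.filter_congr (fun w hw => ?_))
        have hwv : w ≠ u := fun h => hnm (h ▸ hw)
        rw [hgne w hwv]
      have h2 : monoNbrs G f u = cnt (f u) := rfl
      simp [hnm, h1, h2]
      omega
    · have hne : ∀ P : ℕ, (if u = v then P else 0) = 0 := fun P => if_neg huv
      rw [hne, hne]
      have hgu : g u = f u := hgne u huv
      by_cases hadj : u ∈ G.neighborFinset v
      · have hvu : v ∈ G.neighborFinset u := by
          rw [mem_neighborFinset] at hadj ⊢; exact hadj.symm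
        have expand : ∀ h : V → Fin d, monoNbrs G h u =
            ∑ w ∈ G.neighborFinset u, (if h w = h u then 1 else 0) :=
          fun h => Finset.card_filter _ _
        rw [if_pos hadj, if_pos hadj, expand, expand,
          ← Finset.add_sum_erase _ _ hvu, ← Finset.add_sum_erase _ _ hvu]
        have hrest : ∑ w ∈ (G.neighborFinset u).erase v, (if g w = g u then 1 else 0)
            = ∑ w ∈ (G.neighborFinset u).erase v, (if f w = f u then 1 else 0) := by
          refine Finset.sum_congr rfl (fun w hw => ?_)
          rw [hgne w (Finset.ne_of_mem_erase hw), hgu]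
        rw [hrest, hgv, hgu]
        omega
      · have hvu : v ∉ G.neighborFinset u := by
          rw [mem_neighborFinset] at hadj ⊢
          exact fun h => hadj h.symm
        have h1 : monoNbrs G g u = monoNbrs G f u := by
          unfold monoNbrs
          rw [hgu]
          refine congrArg Finset.card (Finset.filter_congr (fun w hw => ?_))
          have hwv : w ≠ v := fun h => hvu (h ▸ hw)
          rw [hgne w hwv]
        rw [if_neg hadj, if_neg hadj, h1]
  have hsummed : wt G g + (cnt (f v) + cnt (f v)) = wt G f + (cnt i + cnt i) := by
    have := Finset.sum_congr rfl (fun u (_ : u ∈ (univ : Finset V)) => key u)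
    rw [Finset.sum_add_distrib, Finset.sum_add_distrib] at this
    rw [Finset.sum_add_distrib, Finset.sum_add_distrib] at this
    have e1 : ∑ u : V, (if u ∈ G.neighborFinset v then (if f v = f u then 1 else 0) else 0)
        = cnt (f v) := by
      rw [Finset.sum_ite_mem, Finset.univ_inter,
        show cnt (f v) = ((G.neighborFinset v).filter (fun u => f u = f v)).card from rfl,
        Finset.card_filter]
      exact Finset.sum_congr rfl (fun w _ => by simp [eq_comm])
    have e2 : ∑ u : V, (if u ∈ G.neighborFinset v then (if i = f u then 1 else 0) else 0)
        = cnt i := by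
      rw [Finset.sum_ite_mem, Finset.univ_inter,
        show cnt i = ((G.neighborFinset v).filter (fun u => f u = i)).card from rfl,
        Finset.card_filter]
      exact Finset.sum_congr rfl (fun w _ => by simp [eq_comm])
    have e3 : ∀ c : ℕ, ∑ u : V, (if u = v then c else 0) = c := by
      intro c
      rw [Finset.sum_ite_eq' Finset.univ v (fun _ => c), if_pos (mem_univ v)]
    rw [e1, e2, e3, e3] at this
    exact this
  have hmin : wt G f ≤ wt G g := hf g (mem_univ g)
  have h2 : 2 ≤ cnt (f v) := hv
  omega

end partition

lemma ceil_even_sub (k : ℕ) : ⌈(((k + k : ℕ) : ℚ) - 1) / 2⌉ = (k : ℤ) := by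
  rw [Int.ceil_eq_iff]
  constructor <;> push_cast <;> [linarith; linarith]

lemma ceil_even_add (k : ℕ) : ⌈(((k + k : ℕ) : ℚ) + 1) / 2⌉ = (k : ℤ) + 1 := by
  rw [Int.ceil_eq_iff]
  constructor <;> push_cast <;> [linarith; linarith]

lemma ceil_odd_sub (k : ℕ) : ⌈(((2 * k + 1 : ℕ) : ℚ) - 1) / 2⌉ = (k : ℤ) := by
  rw [Int.ceil_eq_iff]
  constructor <;> push_cast <;> [linarith; linarith]

lemma ceil_odd_add (k : ℕ) : ⌈(((2 * k + 1 : ℕ) : ℚ) + 1) / 2⌉ = (k : ℤ) + 1 := by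
  rw [Int.ceil_eq_iff]
  constructor <;> push_cast <;> [linarith; linarith]



open SimpleGraph

variable {V : Type*}

theorem psi_three_maxDegree [Fintype V] (G : SimpleGraph V) [DecidableRel G.Adj] :
    (psi G 3 : ℚ) ≤ (⌈((G.maxDegree : ℚ) - 1) / 2⌉ : ℚ) / (⌈((G.maxDegree : ℚ) + 1) / 2⌉ : ℚ)
      * (Fintype.card V : ℚ) := by
  classical
  set Δ := G.maxDegree with hΔ
  set n := Fintype.card V with hn
  set d : ℕ := Δ / 2 + 1 with hdd
  have hd : 1 ≤ d := Nat.le_add_left 1 _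
  have hdeg : ∀ v : V, G.degree v + 1 ≤ 2 * d := fun v => by
    have := G.degree_le_maxDegree v; omega
  obtain ⟨f, hf⟩ := exists_good_coloring G hd hdeg
  -- pigeonhole: some color class has ≥ n / d vertices
  obtain ⟨i₀, hcard⟩ : ∃ i₀ : Fin d,
      n ≤ d * ((Finset.univ.filter (fun x => f x = i₀)).card) := by
    by_contra h
    push_neg at h
    have hn1 : 0 < n := Nat.lt_of_le_of_lt (Nat.zero_le _) (h ⟨0, hd⟩)
    have hsum : ∑ i : Fin d, (Finset.univ.filter (fun x => f x = i)).card = n := by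
      rw [hn, ← Finset.card_univ]
      exact (Finset.card_eq_sum_card_fiberwise (fun x _ => Finset.mem_univ (f x))).symm
    have h2 : d * n ≤ d * (n - 1) := by
      calc d * n = ∑ i : Fin d, d * (Finset.univ.filter (fun x => f x = i)).card := by
            rw [← Finset.mul_sum, hsum]
        _ ≤ ∑ _i : Fin d, (n - 1) :=
            Finset.sum_le_sum (fun i _ => Nat.le_sub_one_of_lt (h i))
        _ = d * (n - 1) := by simp [mul_comm]
    have := Nat.le_of_mul_le_mul_left h2 (by omega : 0 < d)
    omega
  set m := (Finset.univ.filter (fun x => f x = i₀)).card with hm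
  have hmn : m ≤ n := by
    rw [hm, hn]
    exact le_trans (Finset.card_filter_le _ _) (Finset.card_le_univ _)
  set S : Set V := {x | f x ≠ i₀} with hS
  have hVC : IsPathVC G 3 S := by
    intro u v w hw hlen
    by_contra hno
    push_neg at hno
    cases w with
    | nil => simp at hlen
    | cons h1 p =>
      cases p with
      | nil => simp at hlen
      | cons h2 q =>
        cases q with
        | cons h3 r =>
          simp [SimpleGraph.Walk.length_cons] at hlen
        | nil =>
          rename_i b
          have hsup : (SimpleGraph.Walk.cons h1 (SimpleGraph.Walk.cons h2
              SimpleGraph.Walk.nil)).support = [u, b, v] := rfl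
          have hnodup := hw.support_nodup
          rw [hsup] at hnodup
          simp at hnodup
          have huv : u ≠ v := hnodup.1.2
          have hu : f u = i₀ := by
            have := hno u (by rw [hsup]; simp)
            simpa [hS] using this
          have hb : f b = i₀ := by
            have := hno b (by rw [hsup]; simp)
            simpa [hS] using this
          have hv : f v = i₀ := by
            have := hno v (by rw [hsup]; simp)
            simpa [hS] using this
          have hsubset : ({u, v} : Finset V) ⊆
              (G.neighborFinset b).filter (fun x => f x = f b) := by
            intro x hx
            simp only [Finset.mem_insert, Finset.mem_singleton] at hx
            rcases hx with rfl | rfl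
            · rw [Finset.mem_filter, SimpleGraph.mem_neighborFinset]
              exact ⟨h1.symm, by rw [hu, hb]⟩
            · rw [Finset.mem_filter, SimpleGraph.mem_neighborFinset]
              exact ⟨h2, by rw [hv, hb]⟩
          have : 2 ≤ monoNbrs G f b := by
            have := Finset.card_le_card hsubset
            rwa [Finset.card_pair huv] at this
          have := hf b
          omega
  have hncard : S.ncard = n - m := by
    rw [Set.ncard_eq_toFinset_card']
    have hTF : S.toFinset = Finset.univ.filter (fun x => ¬ (f x = i₀)) := by
      ext x; simp [hS]
    rw [hTF]
    have := Finset.card_filter_add_card_filter_not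
      (s := (Finset.univ : Finset V)) (p := fun x => f x = i₀)
    rw [Finset.card_univ, ← hn, ← hm] at this
    omega
  have hpsi : psi G 3 ≤ n - m := Nat.sInf_le ⟨S, hVC, hncard⟩
  -- identify the ceilings
  have hceil : (⌈((Δ : ℚ) - 1) / 2⌉ : ℚ) = (d : ℚ) - 1 ∧
      (⌈((Δ : ℚ) + 1) / 2⌉ : ℚ) = (d : ℚ) := by
    rcases Nat.even_or_odd Δ with ⟨k, hk⟩ | ⟨k, hk⟩
    · have h2 : d = k + 1 := by omega
      rw [hk, h2, ceil_even_sub, ceil_even_add]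
      constructor <;> push_cast <;> ring
    · have hk' : Δ = 2 * k + 1 := by omega
      have h2 : d = k + 1 := by omega
      rw [hk', h2, ceil_odd_sub, ceil_odd_add]
      constructor <;> push_cast <;> ring
  rw [hceil.1, hceil.2]
  have hd0 : (0 : ℚ) < d := by exact_mod_cast hd
  rw [div_mul_eq_mul_div, le_div_iff₀ hd0]
  have hq1 : (psi G 3 : ℚ) ≤ (n : ℚ) - m := by
    have : (psi G 3 : ℚ) ≤ ((n - m : ℕ) : ℚ) := by exact_mod_cast hpsi
    rwa [Nat.cast_sub hmn] at this
  have hq2 : (n : ℚ) ≤ (d : ℚ) * m := by exact_mod_cast hcard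
  nlinarith [mul_le_mul_of_nonneg_right hq1 hd0.le]
end

section
/- For every graph G with maximum degree at most 3, ψ_3(G) ≤ min(|V(G)|/2, |E(G)|/2). -/
open SimpleGraph

variable {V : Type*}

/-!
A set `S` meets every path on three vertices as soon as every vertex outside `S` has at most one
neighbour outside `S`, i.e. `Sᶜ` is a dissociation set.

Edge bound: a vertex of degree at least two is put into the cover and its edges are deleted, which
removes at least two edges per cover vertex; once all degrees are at most one, `∅` is a cover.

Vertex bound: take a bipartition `(A, Aᶜ)` minimising the number of monochromatic edges. Moving a
vertex to the other side trades its neighbours on its own side for those on the other side, so at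
a minimum every vertex has at most half of its neighbours on its own side, hence at most one when
the degree is at most three. Then `A` and `Aᶜ` are both dissociation sets, so both are covers,
and the smaller one has at most `n / 2` vertices.
-/

open Finset

namespace SimpleGraph

variable {G : SimpleGraph V}

def IsDissociationSet (G : SimpleGraph V) (T : Set V) : Prop :=
  ∀ v ∈ T, (G.neighborSet v ∩ T).Subsingleton

lemma IsDissociationSet.isPathVC_three_compl {S : Set V} (hS : G.IsDissociationSet Sᶜ) :
    IsPathVC G 3 S := by
  rintro u v (_ | ⟨hua, _ | ⟨haw, _ | _⟩⟩) hp hlen <;> simp at hlen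
  rename_i a
  by_contra! hnot
  simp only [Walk.support_cons, Walk.support_nil, List.mem_cons, List.not_mem_nil, or_false,
    forall_eq_or_imp, forall_eq] at hnot
  have huv : u ≠ v := by simp_all [Walk.cons_isPath_iff]
  exact huv (hS a hnot.2.1 ⟨hua.symm, hnot.1⟩ ⟨haw, hnot.2.2⟩)

lemma psi_le_ncard {k : ℕ} {S : Set V} (hS : IsPathVC G k S) : psi G k ≤ S.ncard :=
  Nat.sInf_le ⟨S, hS, rfl⟩

lemma psi_three_le_card {S : Finset V} (hS : G.IsDissociationSet (↑S)ᶜ) : psi G 3 ≤ #S := by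
  simpa using psi_le_ncard hS.isPathVC_three_compl

section Counting

variable [DecidableRel G.Adj]

lemma isDissociationSet_of_card_le_one {T : Finset V}
    (hT : ∀ v ∈ T, #{y ∈ T | G.Adj v y} ≤ 1) : G.IsDissociationSet T := by
  intro v hv a ha b hb
  exact card_le_one.1 (hT v hv) a (mem_filter.2 ⟨ha.2, ha.1⟩) b (mem_filter.2 ⟨hb.2, hb.1⟩)

lemma card_interedges_singleton_left (x : V) (s : Finset V) :
    #(G.interedges {x} s) = #{y ∈ s | G.Adj x y} := by
  have : G.interedges {x} s = {y ∈ s | G.Adj x y}.map ⟨Prod.mk x, Prod.mk_right_injective x⟩ := by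
    ext ⟨a, b⟩
    simp only [mem_interedges_iff, mem_singleton, mem_map, mem_filter,
      Function.Embedding.coeFn_mk, Prod.mk.injEq]
    aesop
  rw [this, card_map]

variable [DecidableEq V]

lemma card_interedges_insert_left {x : V} {s : Finset V} (hx : x ∉ s) (t : Finset V) :
    #(G.interedges (insert x s) t) = #(G.interedges {x} t) + #(G.interedges s t) := by
  rw [← card_union_of_disjoint (G.interedges_disjoint_left (disjoint_singleton_left.2 hx) t)]
  congr 1
  ext ⟨a, b⟩
  simp only [mem_interedges_iff, mem_insert, mem_union, mem_singleton]
  tauto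

lemma card_interedges_insert_right {x : V} {s : Finset V} (hx : x ∉ s) (t : Finset V) :
    #(G.interedges t (insert x s)) = #(G.interedges {x} t) + #(G.interedges t s) := by
  have := G.symm
  have comm (a b : Finset V) : #(G.interedges a b) = #(G.interedges b a) :=
    Rel.card_interedges_comm a b
  rw [comm, card_interedges_insert_left hx, comm s]

lemma card_interedges_insert_self {x : V} {s : Finset V} (hx : x ∉ s) :
    #(G.interedges (insert x s) (insert x s)) =
      #(G.interedges s s) + 2 * #{y ∈ s | G.Adj x y} := by
  rw [card_interedges_insert_left hx, card_interedges_insert_right hx,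
    card_interedges_insert_right hx, card_interedges_singleton_left x {x},
    card_interedges_singleton_left x s]
  simp only [filter_singleton, SimpleGraph.irrefl, if_false, card_empty]
  ring

lemma card_filter_adj_erase (A : Finset V) (x : V) :
    #{y ∈ A.erase x | G.Adj x y} = #{y ∈ A | G.Adj x y} := by
  rw [filter_erase, erase_eq_of_notMem (by simp)]

end Counting

variable [Fintype V] [DecidableRel G.Adj]

variable (G) in
lemma exists_isDissociationSet_compl_two_mul_card_le :
    ∃ S : Finset V, G.IsDissociationSet (↑S)ᶜ ∧ 2 * #S ≤ #G.edgeFinset := by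
  classical
  induction hm : #G.edgeFinset using Nat.strong_induction_on generalizing G with
  | _ m ih =>
  by_cases hdeg : ∀ v, G.degree v ≤ 1
  · refine ⟨∅, ?_, by simp⟩
    rw [coe_empty, Set.compl_empty, ← coe_univ]
    refine isDissociationSet_of_card_le_one fun v _ => ?_
    rw [← neighborFinset_eq_filter, card_neighborFinset_eq_degree]
    exact hdeg v
  obtain ⟨v, hv⟩ : ∃ v, 1 < G.degree v := by simpa using hdeg
  have hdel : #(G.deleteIncidenceSet v).edgeFinset + G.degree v = m := by
    rw [card_edgeFinset_deleteIncidenceSet, ← hm]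
    exact Nat.sub_add_cancel (G.degree_le_card_edgeFinset v)
  obtain ⟨S, hS, hcard⟩ := ih _ (by omega) (G.deleteIncidenceSet v) rfl
  refine ⟨insert v S, fun u hu => ?_, ?_⟩
  · have hu' : u ∈ (↑S : Set V)ᶜ := fun h => hu (mem_insert_of_mem h)
    refine (hS u hu').anti fun w ⟨huw, hw⟩ => ⟨?_, fun h => hw (mem_insert_of_mem h)⟩
    exact deleteIncidenceSet_adj.2 ⟨huw, fun h => hu (h ▸ mem_insert_self v S),
      fun h => hw (h ▸ mem_insert_self v S)⟩
  · have := card_insert_le v S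
    omega

section MaxCut

variable [DecidableEq V]

variable (G) in
def monochromaticPairs (A : Finset V) : ℕ :=
  #(G.interedges A A) + #(G.interedges Aᶜ Aᶜ)

lemma monochromaticPairs_compl (A : Finset V) :
    G.monochromaticPairs Aᶜ = G.monochromaticPairs A := by
  rw [monochromaticPairs, monochromaticPairs, compl_compl, add_comm]

lemma monochromaticPairs_add_eq_erase_add {A : Finset V} {x : V} (hx : x ∈ A) :
    G.monochromaticPairs A + 2 * #{y ∈ Aᶜ | G.Adj x y} =
      G.monochromaticPairs (A.erase x) + 2 * #{y ∈ A | G.Adj x y} := by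
  have hA := G.card_interedges_insert_self (notMem_erase x A)
  rw [insert_erase hx, card_filter_adj_erase] at hA
  rw [monochromaticPairs, monochromaticPairs, compl_erase,
    card_interedges_insert_self (notMem_compl.2 hx), hA]
  ring

lemma card_filter_adj_add_card_filter_compl_adj (A : Finset V) (x : V) :
    #{y ∈ A | G.Adj x y} + #{y ∈ Aᶜ | G.Adj x y} = G.degree x := by
  rw [← card_union_of_disjoint (disjoint_filter_filter disjoint_compl_right), ← filter_union,
    union_compl, ← neighborFinset_eq_filter, card_neighborFinset_eq_degree]

lemma two_mul_card_filter_adj_le_degree {A : Finset V}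
    (hA : ∀ B, G.monochromaticPairs A ≤ G.monochromaticPairs B) {x : V} (hx : x ∈ A) :
    2 * #{y ∈ A | G.Adj x y} ≤ G.degree x := by
  have hmove := monochromaticPairs_add_eq_erase_add (G := G) hx
  have hmin := hA (A.erase x)
  have hsplit := card_filter_adj_add_card_filter_compl_adj (G := G) A x
  omega

variable (G) in
lemma exists_forall_two_mul_card_filter_adj_le_degree :
    ∃ A : Finset V, (∀ x ∈ A, 2 * #{y ∈ A | G.Adj x y} ≤ G.degree x) ∧
      ∀ x ∈ Aᶜ, 2 * #{y ∈ Aᶜ | G.Adj x y} ≤ G.degree x := by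
  obtain ⟨A, hA⟩ := Finite.exists_min G.monochromaticPairs
  refine ⟨A, fun x => two_mul_card_filter_adj_le_degree hA,
    fun x => two_mul_card_filter_adj_le_degree ?_⟩
  simpa only [monochromaticPairs_compl] using hA

end MaxCut

variable (G) in
lemma two_mul_psi_three_le_card_edgeFinset : 2 * psi G 3 ≤ #G.edgeFinset := by
  obtain ⟨S, hS, hcard⟩ := G.exists_isDissociationSet_compl_two_mul_card_le
  have := psi_three_le_card hS
  omega

lemma two_mul_psi_three_le_card (h : G.maxDegree ≤ 3) : 2 * psi G 3 ≤ Fintype.card V := by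
  classical
  obtain ⟨A, hA, hAc⟩ := G.exists_forall_two_mul_card_filter_adj_le_degree
  have hdeg (x : V) : G.degree x ≤ 3 := (G.degree_le_maxDegree x).trans h
  have hdisA : G.IsDissociationSet A :=
    isDissociationSet_of_card_le_one fun x hx => by have := hA x hx; have := hdeg x; omega
  have hdisAc : G.IsDissociationSet ↑Aᶜ :=
    isDissociationSet_of_card_le_one fun x hx => by have := hAc x hx; have := hdeg x; omega
  have hcoverA : psi G 3 ≤ #A := psi_three_le_card (by rwa [← coe_compl])
  have hcoverAc : psi G 3 ≤ #Aᶜ := psi_three_le_card (by rwa [coe_compl, compl_compl])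
  have := card_add_card_compl A
  omega

end SimpleGraph

theorem psi_three_subcubic [Fintype V] (G : SimpleGraph V) [DecidableRel G.Adj]
    (h : G.maxDegree ≤ 3) :
    (psi G 3 : ℚ) ≤ min ((Fintype.card V : ℚ) / 2) ((G.edgeSet.ncard : ℚ) / 2) := by
  have hV : (2 * psi G 3 : ℚ) ≤ Fintype.card V := by
    exact_mod_cast G.two_mul_psi_three_le_card h
  have hE : (2 * psi G 3 : ℚ) ≤ G.edgeSet.ncard := by
    rw [← coe_edgeFinset, Set.ncard_coe_finset]
    exact_mod_cast G.two_mul_psi_three_le_card_edgeFinset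
  rw [le_min_iff]
  constructor <;> linarith
end

section
/- Let k ≥ 2, let G be a graph, and let G' be obtained from G by attaching to every vertex of G a pendant path with ⌊(k−1)/2⌋ new vertices. Then ψ_k(G') equals the minimum cardinality of a vertex cover of G. -/
/-!
Together with the pendant path hanging from it, a vertex `v` of `G` spans a "fibre" of
`p + 1 ≤ k - 1` vertices of `G'`, where `p = ⌊(k - 1)/2⌋`, and `G'` has no edges between distinct
fibres other than the edges of `G`. So a path on `k` vertices of `G'` cannot stay in one fibre and
uses an edge of `G`: a vertex cover of `G` is a `k`-path vertex cover of `G'`. Conversely, an edge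
`uv` of `G` lies on the path of `2p + 2 ≥ k` vertices running through the fibres of `u` and `v`, so
the base points of a `k`-path vertex cover of `G'` form a vertex cover of `G` of no larger size.
-/

open SimpleGraph

variable {V : Type*}

/-- The minimum cardinality of a vertex cover of `G`. -/
noncomputable def minVC (G : SimpleGraph V) : ℕ :=
  sInf {n | ∃ S : Set V, (∀ ⦃u v : V⦄, G.Adj u v → u ∈ S ∨ v ∈ S) ∧ S.ncard = n}

/-- The graph obtained from `G` by attaching to each vertex `v` a pendant path
with `p` new vertices `(v,0), (v,1), …, (v,p-1)`, where `(v,0)` is joined to `v`. -/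
def attachPaths (G : SimpleGraph V) (p : ℕ) : SimpleGraph (V ⊕ V × Fin p) :=
  SimpleGraph.fromRel (fun a b =>
    match a, b with
    | Sum.inl u, Sum.inl v => G.Adj u v
    | Sum.inl u, Sum.inr (v, i) => u = v ∧ (i : ℕ) = 0
    | Sum.inr (u, i), Sum.inr (v, j) => u = v ∧ (j : ℕ) = (i : ℕ) + 1
    | _, _ => False)

open Function Sum

namespace SimpleGraph.Walk

lemma exists_support_eq_map_range {W : Type*} {H : SimpleGraph W} (f : ℕ → W) (n : ℕ)
    (hadj : ∀ i < n, H.Adj (f i) (f (i + 1))) :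
    ∃ (a b : W) (w : H.Walk a b), w.support = (List.range (n + 1)).map f := by
  have hchain : ((List.range (n + 1)).map f).IsChain H.Adj := by
    rw [List.isChain_map, List.isChain_range_succ]
    exact hadj
  exact ⟨_, _, ofSupport _ (by simp) hchain, support_ofSupport _ _⟩

end SimpleGraph.Walk

section CoverNumbers

variable {G : SimpleGraph V} {k : ℕ}

lemma psi_le {S : Set V} (hS : IsPathVC G k S) : psi G k ≤ S.ncard :=
  Nat.sInf_le (by exact ⟨S, hS, rfl⟩)

variable (G k) in
lemma exists_isPathVC_ncard_eq_psi : ∃ S, IsPathVC G k S ∧ S.ncard = psi G k :=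
  Nat.sInf_mem (s := {n | ∃ S : Set V, IsPathVC G k S ∧ S.ncard = n})
    ⟨_, Set.univ, fun a _ w _ _ ↦ ⟨a, w.start_mem_support, trivial⟩, rfl⟩

lemma minVC_le {S : Set V} (hS : G.IsVertexCover S) : minVC G ≤ S.ncard :=
  Nat.sInf_le (by exact ⟨S, hS, rfl⟩)

variable (G) in
lemma exists_isVertexCover_ncard_eq_minVC : ∃ S, G.IsVertexCover S ∧ S.ncard = minVC G :=
  Nat.sInf_mem (s := {n | ∃ S : Set V, G.IsVertexCover S ∧ S.ncard = n})
    ⟨_, Set.univ, isVertexCover_univ, rfl⟩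

end CoverNumbers

section AttachPaths

variable {G : SimpleGraph V} {p : ℕ}

def attachBase : V ⊕ V × Fin p → V := Sum.elim id Prod.fst

/-- The distance to `attachBase`: the pendant vertex `(v, i)` has level `i + 1`. -/
def attachLevel : V ⊕ V × Fin p → Fin (p + 1) := Sum.elim (fun _ ↦ 0) (fun x ↦ x.2.succ)

lemma attachBase_attachLevel_injective :
    Injective fun x : V ⊕ V × Fin p ↦ (attachBase x, attachLevel x) := by
  rintro (u | ⟨u, i⟩) (v | ⟨v, j⟩) h <;>
    simp_all [attachBase, attachLevel, eq_comm (a := (0 : Fin (p + 1)))]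

lemma attachPaths_adj_inl_inl {u v : V} :
    (attachPaths G p).Adj (inl u) (inl v) ↔ G.Adj u v := by
  simp +contextual [attachPaths, G.adj_comm, fun h : G.Adj u v ↦ h.ne]

lemma exists_adj_of_attachPaths_adj {a b : V ⊕ V × Fin p} (h : (attachPaths G p).Adj a b)
    (hne : attachBase a ≠ attachBase b) : ∃ u v, G.Adj u v ∧ a = inl u ∧ b = inl v := by
  rcases a with u | ⟨u, i⟩ <;> rcases b with v | ⟨v, j⟩ <;>
    simp_all [attachPaths, attachBase, G.adj_comm]

lemma SimpleGraph.Walk.IsPath.length_le_of_forall_attachBase_eq {a b : V ⊕ V × Fin p}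
    {w : (attachPaths G p).Walk a b} (hw : w.IsPath) {v : V}
    (hv : ∀ x ∈ w.support, attachBase x = v) : w.length ≤ p := by
  have hnodup : (w.support.map attachLevel).Nodup := by
    refine hw.support_nodup.map_on fun x hx y hy hxy ↦ attachBase_attachLevel_injective ?_
    simp [hv x hx, hv y hy, hxy]
  simpa using hnodup.length_le_card

lemma SimpleGraph.Walk.exists_adj_mem_support_or_forall_attachBase_eq {a b : V ⊕ V × Fin p}
    (w : (attachPaths G p).Walk a b) :
    (∃ u v, G.Adj u v ∧ inl u ∈ w.support ∧ inl v ∈ w.support) ∨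
      ∀ x ∈ w.support, attachBase x = attachBase a := by
  induction w with
  | nil => simp
  | @cons a c b h w ih =>
    by_cases hne : attachBase a = attachBase c
    · rcases ih with ⟨u, v, huv, hu, hv⟩ | ih
      · exact .inl ⟨u, v, huv, w.support_subset_support_cons h hu,
          w.support_subset_support_cons h hv⟩
      · exact .inr <| by simpa [hne] using ih
    · obtain ⟨u, v, huv, rfl, rfl⟩ := exists_adj_of_attachPaths_adj h hne
      exact .inl ⟨u, v, huv, by simp, by simp⟩

lemma isPathVC_image_inl {S : Set V} (hS : G.IsVertexCover S) {k : ℕ} (hk : p + 1 < k) :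
    IsPathVC (attachPaths G p) k (inl '' S) := by
  intro a b w hw hlen
  rcases w.exists_adj_mem_support_or_forall_attachBase_eq with ⟨u, v, huv, hu, hv⟩ | hfibre
  · rcases hS huv with h | h
    exacts [⟨_, hu, u, h, rfl⟩, ⟨_, hv, v, h, rfl⟩]
  · have := hw.length_le_of_forall_attachBase_eq hfibre
    omega

variable (p) in
/-- The vertex at distance `i ≤ p` from `v` on the pendant path of `v` (junk for `i > p`). -/
def pendantVertex (v : V) : ℕ → V ⊕ V × Fin p
  | 0 => inl v
  | i + 1 => if h : i < p then inr (v, ⟨i, h⟩) else inl v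

@[simp]
lemma attachBase_pendantVertex (v : V) (i : ℕ) : attachBase (pendantVertex p v i) = v := by
  cases i with
  | zero => rfl
  | succ i => by_cases h : i < p <;> simp [pendantVertex, h, attachBase]

lemma attachLevel_pendantVertex (v : V) {i : ℕ} (hi : i ≤ p) :
    (attachLevel (pendantVertex p v i) : ℕ) = i := by
  cases i with
  | zero => rfl
  | succ i => simp [pendantVertex, show i < p by omega, attachLevel]

lemma attachPaths_adj_pendantVertex (v : V) {i : ℕ} (hi : i < p) :
    (attachPaths G p).Adj (pendantVertex p v i) (pendantVertex p v (i + 1)) := by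
  cases i with
  | zero => simp [pendantVertex, hi, attachPaths]
  | succ i => simp [pendantVertex, hi, show i < p by omega, attachPaths]

lemma exists_isPath_of_adj {u v : V} (huv : G.Adj u v) {m : ℕ} (hm : m ≤ 2 * p + 1) :
    ∃ (a b : V ⊕ V × Fin p) (w : (attachPaths G p).Walk a b), w.IsPath ∧ w.length = m ∧
      ∀ x ∈ w.support, attachBase x = u ∨ attachBase x = v := by
  let f : ℕ → V ⊕ V × Fin p := fun t ↦
    if t ≤ p then pendantVertex p u (p - t) else pendantVertex p v (t - p - 1)
  have hf : ∀ t ≤ 2 * p + 1, (attachBase (f t), (attachLevel (f t) : ℕ)) =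
      if t ≤ p then (u, p - t) else (v, t - p - 1) := by
    intro t ht
    by_cases h : t ≤ p <;>
      simp [f, h, attachLevel_pendantVertex, show t - p - 1 ≤ p by omega]
  have hadj : ∀ t < m, (attachPaths G p).Adj (f t) (f (t + 1)) := by
    intro t ht
    rcases lt_trichotomy t p with h | rfl | h
    · have := attachPaths_adj_pendantVertex (G := G) (p := p) u (i := p - (t + 1)) (by omega)
      simpa [f, h.le, Nat.succ_le_of_lt h, show p - (t + 1) + 1 = p - t by omega] using this.symm
    · simpa [f, pendantVertex, attachPaths_adj_inl_inl] using huv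
    · have := attachPaths_adj_pendantVertex (G := G) (p := p) v (i := t - p - 1) (by omega)
      simpa [f, h.not_ge, show ¬ t + 1 ≤ p by omega, show t - p - 1 + 1 = t + 1 - p - 1 by omega]
        using this
  obtain ⟨a, b, w, hw⟩ := Walk.exists_support_eq_map_range f m hadj
  refine ⟨a, b, w, ?_, ?_, ?_⟩
  · rw [Walk.isPath_def, hw]
    refine List.nodup_range.map_on fun s hs t ht hst ↦ ?_
    simp only [List.mem_range] at hs ht
    have := congrArg (fun x ↦ (attachBase x, (attachLevel x : ℕ))) hst
    simp only [hf s (by omega), hf t (by omega)] at this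
    split_ifs at this <;> simp only [Prod.mk.injEq] at this <;> grind [huv.ne]
  · simpa using congrArg List.length hw
  · simp only [hw, List.mem_map, forall_exists_index, and_imp, forall_apply_eq_imp_iff₂, f]
    intro t _
    split_ifs <;> simp

lemma isVertexCover_image_attachBase {k : ℕ} {S : Set (V ⊕ V × Fin p)}
    (hS : IsPathVC (attachPaths G p) k S) (hk₀ : 0 < k) (hk : k ≤ 2 * p + 2) :
    G.IsVertexCover (attachBase '' S) := by
  intro u v huv
  obtain ⟨a, b, w, hw, hlen, hbase⟩ := exists_isPath_of_adj huv (by omega : k - 1 ≤ 2 * p + 1)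
  obtain ⟨x, hx, hxS⟩ := hS w hw (by omega)
  exact (hbase x hx).imp (fun h ↦ ⟨x, hxS, h⟩) (fun h ↦ ⟨x, hxS, h⟩)

end AttachPaths

theorem psi_attach_eq_minVC [Fintype V] (G : SimpleGraph V) (k : ℕ) (hk : 2 ≤ k) :
    psi (attachPaths G ((k - 1) / 2)) k = minVC G := by
  apply le_antisymm
  · obtain ⟨S, hS, hcard⟩ := exists_isVertexCover_ncard_eq_minVC G
    calc psi _ k ≤ (inl '' S).ncard := psi_le (isPathVC_image_inl hS (by omega))
      _ = minVC G := by rw [Set.ncard_image_of_injective _ inl_injective, hcard]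
  · obtain ⟨S, hS, hcard⟩ := exists_isPathVC_ncard_eq_psi (attachPaths G ((k - 1) / 2)) k
    calc minVC G ≤ (attachBase '' S).ncard :=
          minVC_le (isVertexCover_image_attachBase hS (by omega) (by omega))
      _ ≤ S.ncard := Set.ncard_image_le
      _ = _ := hcard
end
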